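/- arXiv:math/0611283 — 4 statements merged into one kernel-verified Lean document; each statement's English description precedes it below -/
import Mathlib

section
/- With ω as in the construction (ω(ξ) = ξ - ξ^r on [0,δ], ω'(ξ) = γ δ^α ξ^{-α} for ξ > δ, where r ∈ (1,2), α ∈ (0,1), δ ∈ (0,1) with δ - δ^r ≥ δ/2, and 0 < γ < (1-α)/2), there exists a constant C > 0 depending only on α such that ω(2ξ) - 2ω(ξ) ≤ -C ω(ξ) for all ξ > δ. -/
open Set

theorem omega_doubling_estimate (r α δ γ : ℝ)
    (hr : 1 < r) (hr2 : r < 2) (hα0 : 0 < α) (hα1 : α < 1)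
    (hδ0 : 0 < δ) (hδ1 : δ < 1)
    (hδr : δ / 2 ≤ δ - δ ^ r)
    (hγ0 : 0 < γ) (hγ : γ < (1 - α) / 2)
    (ω : ℝ → ℝ)
    (hω1 : ∀ ξ ∈ Icc (0:ℝ) δ, ω ξ = ξ - ξ ^ r)
    (hω2 : ∀ ξ > δ, ω ξ = (δ - δ ^ r) + ∫ η in δ..ξ, γ * δ ^ α * η ^ (-α)) :
    ∃ C > (0:ℝ), ∀ ξ > δ, ω (2 * ξ) - 2 * ω ξ ≤ -C * ω ξ := by
  have h1α : 0 < 1 - α := by linarith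
  set A := δ - δ ^ r with hA
  set c := γ * δ ^ α / (1 - α) with hc
  have hδα : (0:ℝ) < δ ^ α := Real.rpow_pos_of_pos hδ0 α
  have hc0 : 0 < c := by positivity
  have hform : ∀ ξ > δ, ω ξ = A + c * ξ ^ (1-α) - c * δ ^ (1-α) := by
    intro ξ hξ
    rw [hω2 ξ hξ, intervalIntegral.integral_const_mul,
      integral_rpow (Or.inl (by linarith))]
    have h : -α + 1 = 1 - α := by ring
    rw [h, hc]
    field_simp
    ring
  have hkey : c * δ ^ (1-α) ≤ A := by
    have h1 : c * δ ^ (1-α) = γ * δ / (1-α) := by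
      rw [hc, div_mul_eq_mul_div, mul_assoc, ← Real.rpow_add hδ0]
      norm_num
    have h2 : γ * δ / (1-α) < δ / 2 := by
      rw [div_lt_div_iff₀ h1α (by norm_num)]
      nlinarith
    linarith
  have h2pos : (1:ℝ) < 2 ^ (1-α) :=
    Real.one_lt_rpow_iff_of_pos (by norm_num) |>.mpr (Or.inl ⟨by norm_num, h1α⟩)
  have h2lt : (2:ℝ) ^ (1-α) < 2 := by
    have : (2:ℝ) ^ (1-α) < 2 ^ (1:ℝ) :=
      Real.rpow_lt_rpow_left_iff (by norm_num) |>.mpr (by linarith)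
    simpa using this
  refine ⟨2 - 2 ^ (1-α), by linarith, ?_⟩
  intro ξ hξ
  have hξ0 : 0 < ξ := lt_trans hδ0 hξ
  have h2ξ : 2 * ξ > δ := by linarith
  have hωξ := hform ξ hξ
  have hω2ξ := hform (2*ξ) h2ξ
  have hmul : (2*ξ) ^ (1-α) = 2 ^ (1-α) * ξ ^ (1-α) :=
    Real.mul_rpow (by norm_num) hξ0.le
  rw [hω2ξ, hωξ, hmul]
  have hξα : 0 < ξ ^ (1-α) := Real.rpow_pos_of_pos hξ0 (1-α)
  have hδξ : δ ^ (1-α) ≤ ξ ^ (1-α) :=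
    Real.rpow_le_rpow hδ0.le (le_of_lt hξ) h1α.le
  nlinarith [mul_nonneg (by linarith : (0:ℝ) ≤ 2 ^ (1-α) - 1)
    (by linarith : (0:ℝ) ≤ A - c * δ ^ (1-α)),
    mul_nonneg hc0.le (sub_nonneg.mpr hδξ)]
end

section
/- Let ω be the modulus of continuity with ω(ξ) = ξ - ξ^r on [0,δ] and ω'(ξ) = γ δ^α ξ^{-α} for ξ > δ, where r ∈ (1,2), α ∈ (0,1), δ ∈ (0,1), and 0 < γ ≤ α. Then for all ξ ∈ (0, δ]: ∫_ξ^∞ ω(η)/η² dη ≤ log(δ/ξ) + 2. -/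
/-!
On `(0, δ]` we have `ω η ≤ η`, so the integral over `(ξ, δ]` is at most `∫_ξ^δ dη/η = log (δ/ξ)`.
On `(δ, ∞)` the function `ω` is an affine function of `η ^ (1 - α)`, so its tail integral against
`η⁻²` can be computed exactly: it equals `1 - δ ^ (r - 1) + γ / α ≤ 2`.
-/

open Set Real MeasureTheory

section Tail

variable {a α : ℝ}

lemma affine_rpow_div_sq_eq {η : ℝ} (hη : 0 < η) (c d : ℝ) :
    (c + d * (η ^ (1 - α) - a ^ (1 - α))) / η ^ 2
      = (c - d * a ^ (1 - α)) * η ^ (-2 : ℝ) + d * η ^ (-1 - α) := by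
  have h_sq : η ^ (-2 : ℝ) = (η ^ 2)⁻¹ := by
    rw [rpow_neg hη.le, rpow_two]
  have h_split : η ^ (-1 - α) = η ^ (1 - α) * (η ^ 2)⁻¹ := by
    rw [show -1 - α = (1 - α) + (-2) by ring, rpow_add hη, h_sq]
  rw [h_sq, h_split]
  ring

lemma integrableOn_Ioi_affine_rpow_div_sq (ha : 0 < a) (hα : 0 < α) (c d : ℝ) :
    IntegrableOn (fun η => (c + d * (η ^ (1 - α) - a ^ (1 - α))) / η ^ 2) (Ioi a) := by
  refine IntegrableOn.congr_fun ?_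
    (fun η hη => (affine_rpow_div_sq_eq (ha.trans hη) c d).symm) measurableSet_Ioi
  exact ((integrableOn_Ioi_rpow_of_lt (by norm_num) ha).const_mul _).add
    ((integrableOn_Ioi_rpow_of_lt (by linarith) ha).const_mul _)

lemma integral_Ioi_affine_rpow_div_sq (ha : 0 < a) (hα : 0 < α) (c d : ℝ) :
    ∫ η in Ioi a, (c + d * (η ^ (1 - α) - a ^ (1 - α))) / η ^ 2
      = c / a + d * a ^ (-α) * (1 - α) / α := by
  rw [setIntegral_congr_fun measurableSet_Ioi
      (fun η hη => affine_rpow_div_sq_eq (ha.trans hη) c d),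
    integral_add ((integrableOn_Ioi_rpow_of_lt (by norm_num) ha).const_mul _)
      ((integrableOn_Ioi_rpow_of_lt (by linarith) ha).const_mul _),
    integral_const_mul, integral_const_mul,
    integral_Ioi_rpow_of_lt (by norm_num) ha, integral_Ioi_rpow_of_lt (by linarith) ha,
    show (-2 : ℝ) + 1 = -1 by norm_num, show -1 - α + 1 = -α by ring, rpow_neg_one]
  have h_pow : a ^ (1 - α) = a * a ^ (-α) := by
    rw [show 1 - α = 1 + -α by ring, rpow_add ha, rpow_one]
  rw [h_pow]
  field_simp
  ring

end Tail

section Near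

variable {a b : ℝ}

lemma integrableOn_Ioc_sub_rpow_div_sq (ha : 0 < a) (r : ℝ) :
    IntegrableOn (fun η => (η - η ^ r) / η ^ 2) (Ioc a b) := by
  refine (ContinuousOn.integrableOn_Icc ?_).mono_set Ioc_subset_Icc_self
  have h_ne : ∀ η ∈ Icc a b, η ≠ 0 := fun η hη => (ha.trans_le hη.1).ne'
  exact (continuousOn_id.sub (continuousOn_id.rpow_const fun η hη => Or.inl (h_ne η hη))).div
    (continuousOn_id.pow 2) fun η hη => pow_ne_zero 2 (h_ne η hη)

lemma integral_Ioc_sub_rpow_div_sq_le_log (ha : 0 < a) (hab : a ≤ b) (r : ℝ) :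
    ∫ η in Ioc a b, (η - η ^ r) / η ^ 2 ≤ log (b / a) := by
  have h_inv : IntegrableOn (fun η : ℝ => η⁻¹) (Ioc a b) :=
    (ContinuousOn.integrableOn_Icc (continuousOn_inv₀.mono fun η hη =>
      (ha.trans_le hη.1).ne')).mono_set Ioc_subset_Icc_self
  calc ∫ η in Ioc a b, (η - η ^ r) / η ^ 2 ≤ ∫ η in Ioc a b, η⁻¹ := by
        refine setIntegral_mono_on (integrableOn_Ioc_sub_rpow_div_sq ha r) h_inv
          measurableSet_Ioc fun η hη => ?_
        have hη : 0 < η := ha.trans hη.1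
        rw [div_le_iff₀ (by positivity), show η⁻¹ * η ^ 2 = η by field_simp]
        linarith [rpow_nonneg hη.le r]
    _ = log (b / a) := by
        rw [← intervalIntegral.integral_of_le hab, integral_inv_of_pos ha (ha.trans_le hab)]

end Near

theorem tail_integral_bound_near_general (r α δ γ : ℝ)
    (hα0 : 0 < α) (hα1 : α < 1)
    (hδ0 : 0 < δ)
    (hγα : γ ≤ α)
    (ω : ℝ → ℝ)
    (hω1 : ∀ ξ ∈ Icc (0:ℝ) δ, ω ξ = ξ - ξ ^ r)
    (hω2 : ∀ ξ > δ, ω ξ = (δ - δ ^ r) + ∫ η in δ..ξ, γ * δ ^ α * η ^ (-α)) :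
    ∀ ξ ∈ Ioc (0:ℝ) δ,
      (∫ η in Ioi ξ, ω η / η ^ 2) ≤ Real.log (δ / ξ) + 2 := by
  rintro ξ ⟨hξ0, hξδ⟩
  set K := γ * δ ^ α / (1 - α)
  have h_far : ∀ η ∈ Ioi δ,
      ω η / η ^ 2 = ((δ - δ ^ r) + K * (η ^ (1 - α) - δ ^ (1 - α))) / η ^ 2 := by
    intro η hη
    rw [hω2 η hη, intervalIntegral.integral_const_mul,
      integral_rpow (Or.inl (by linarith)), show -α + 1 = 1 - α by ring]
    ring
  have h_near : ∀ η ∈ Ioc ξ δ, ω η / η ^ 2 = (η - η ^ r) / η ^ 2 := fun η hη => by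
    rw [hω1 η ⟨(hξ0.trans hη.1).le, hη.2⟩]
  have h_tail : ∫ η in Ioi δ, ω η / η ^ 2 = 1 - δ ^ (r - 1) + γ / α := by
    rw [setIntegral_congr_fun measurableSet_Ioi h_far, integral_Ioi_affine_rpow_div_sq hδ0 hα0,
      rpow_sub_one hδ0.ne', rpow_neg hδ0.le]
    have h_one_sub : 1 - α ≠ 0 := by linarith
    simp only [K]
    field_simp
  rw [← Ioc_union_Ioi_eq_Ioi hξδ, setIntegral_union (Ioc_disjoint_Ioi le_rfl) measurableSet_Ioi
      ((integrableOn_Ioc_sub_rpow_div_sq hξ0 r).congr_fun (fun η hη => (h_near η hη).symm)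
        measurableSet_Ioc)
      ((integrableOn_Ioi_affine_rpow_div_sq hδ0 hα0 _ _).congr_fun
        (fun η hη => (h_far η hη).symm) measurableSet_Ioi),
    setIntegral_congr_fun measurableSet_Ioc h_near, h_tail]
  have h_log := integral_Ioc_sub_rpow_div_sq_le_log hξ0 hξδ r
  have h_ratio : γ / α ≤ 1 := (div_le_one hα0).2 hγα
  linarith [rpow_pos_of_pos hδ0 (r - 1)]

theorem tail_integral_bound_near (r α δ γ : ℝ)
    (hr : 1 < r) (hr2 : r < 2) (hα0 : 0 < α) (hα1 : α < 1)
    (hδ0 : 0 < δ) (hδ1 : δ < 1)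
    (hγ0 : 0 < γ) (hγα : γ ≤ α)
    (ω : ℝ → ℝ)
    (hω1 : ∀ ξ ∈ Icc (0:ℝ) δ, ω ξ = ξ - ξ ^ r)
    (hω2 : ∀ ξ > δ, ω ξ = (δ - δ ^ r) + ∫ η in δ..ξ, γ * δ ^ α * η ^ (-α)) :
    ∀ ξ ∈ Ioc (0:ℝ) δ,
      (∫ η in Ioi ξ, ω η / η ^ 2) ≤ Real.log (δ / ξ) + 2 :=
  tail_integral_bound_near_general r α δ γ hα0 hα1 hδ0 hγα ω hω1 hω2
end

section
/- Let ω be the modulus of continuity with ω(ξ) = ξ - ξ^r on [0,δ], ω'(η) = γ δ^α η^{-α} for η > δ, where r ∈ (1,2), α ∈ (0,1), δ ∈ (0,1) with δ - δ^r > δ/2, and 0 < γ < (1-α)/2. Then for all ξ > δ: ∫_ξ^∞ ω(η)/η² dη ≤ (1/α) · ω(ξ)/ξ. -/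
open Set Real MeasureTheory

theorem tail_integral_bound_far (r α δ γ : ℝ)
    (hr : 1 < r) (hr2 : r < 2) (hα0 : 0 < α) (hα1 : α < 1)
    (hδ0 : 0 < δ) (hδ1 : δ < 1)
    (hδr : δ / 2 < δ - δ ^ r)
    (hγ0 : 0 < γ) (hγ : γ < (1 - α) / 2)
    (ω : ℝ → ℝ)
    (hω1 : ∀ ξ ∈ Icc (0:ℝ) δ, ω ξ = ξ - ξ ^ r)
    (hω2 : ∀ ξ > δ, ω ξ = (δ - δ ^ r) + ∫ η in δ..ξ, γ * δ ^ α * η ^ (-α)) :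
    ∀ ξ > δ, (∫ η in Ioi ξ, ω η / η ^ 2) ≤ (1 / α) * (ω ξ / ξ) := by
  set A : ℝ := (δ - δ ^ r) - γ * δ / (1 - α) with hA
  set B : ℝ := γ * δ ^ α / (1 - α) with hB
  have h1α : (0:ℝ) < 1 - α := by linarith
  have hA0 : 0 ≤ A := by
    have : γ * δ / (1 - α) ≤ δ / 2 := by
      rw [div_le_div_iff₀ h1α (by norm_num)]
      nlinarith
    simp only [hA]; linarith
  have hB0 : 0 ≤ B := by
    have : (0:ℝ) < δ ^ α := rpow_pos_of_pos hδ0 α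
    positivity
  have hω' : ∀ ξ > δ, ω ξ = A + B * ξ ^ (1 - α) := by
    intro ξ hξ
    rw [hω2 ξ hξ, intervalIntegral.integral_const_mul,
        integral_rpow (Or.inl (by linarith : (-1:ℝ) < -α))]
    have hδα : δ ^ α * δ ^ (1 - α) = δ := by
      rw [← Real.rpow_add hδ0]; norm_num
    have h1 : -α + 1 = 1 - α := by ring
    rw [h1, hA, hB]
    field_simp
    ring_nf
    nlinarith [hδα]
  intro ξ hξ
  have hξ0 : 0 < ξ := lt_trans hδ0 hξ
  have key : (∫ η in Ioi ξ, ω η / η ^ 2)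
      = A * ξ ^ (-1:ℝ) + B * (-ξ ^ (-α) / (-α)) := by
    rw [setIntegral_congr_fun measurableSet_Ioi
      (show ∀ η ∈ Ioi ξ, ω η / η ^ 2 = A * η ^ (-2:ℝ) + B * η ^ (-1 - α) by
        intro η hη
        have hηδ : δ < η := lt_trans hξ hη
        have hη0 : 0 < η := lt_trans hδ0 hηδ
        rw [hω' η hηδ]
        rw [show η ^ (-2:ℝ) = (η ^ 2)⁻¹ by
          rw [← Real.rpow_natCast η 2, ← Real.rpow_neg hη0.le]; norm_num]
        rw [show η ^ (-1 - α) = η ^ (1 - α) * (η ^ 2)⁻¹ by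
          rw [← Real.rpow_natCast η 2, ← Real.rpow_neg hη0.le,
              ← Real.rpow_add hη0]
          congr 1; ring]
        ring)]
    rw [MeasureTheory.integral_add
        ((integrableOn_Ioi_rpow_of_lt (by norm_num) hξ0).const_mul A)
        ((integrableOn_Ioi_rpow_of_lt (by linarith) hξ0).const_mul B),
      integral_const_mul, integral_const_mul,
      integral_Ioi_rpow_of_lt (by norm_num) hξ0,
      integral_Ioi_rpow_of_lt (by linarith) hξ0,
      show (-1:ℝ) - α + 1 = -α by ring]
    norm_num
  rw [key, hω' ξ hξ]
  have hξα : ξ ^ (-α) * ξ = ξ ^ (1 - α) := by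
    nth_rewrite 2 [← Real.rpow_one ξ]
    rw [← Real.rpow_add hξ0]
    congr 1; ring
  have hξ1 : ξ ^ (-1:ℝ) = ξ⁻¹ := by
    rw [Real.rpow_neg hξ0.le, Real.rpow_one]
  rw [hξ1]
  have hu0 : 0 < ξ ^ (-α) := rpow_pos_of_pos hξ0 _
  rw [← hξα]
  have hξne : ξ ≠ 0 := ne_of_gt hξ0
  have hαne : α ≠ 0 := ne_of_gt hα0
  have hdiff : 1 / α * ((A + B * (ξ ^ (-α) * ξ)) / ξ)
      - (A * ξ⁻¹ + B * (-ξ ^ (-α) / -α)) = A * (1 - α) / (α * ξ) := by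
    field_simp
    ring
  nlinarith [mul_nonneg (mul_nonneg hA0 h1α.le) (le_of_lt (inv_pos.mpr (mul_pos hα0 hξ0))),
    hdiff, div_nonneg (mul_nonneg hA0 h1α.le) (mul_pos hα0 hξ0).le]
end

section
/- Let s ∈ (0,1/2) and r ∈ (1,2) with r < 1 + 2s, and let ω(ξ) = ξ - ξ^r. Then there exists c > 0 such that, for δ > 0 small, ∫_0^{ξ/2} [ω(ξ+2η) + ω(ξ-2η) - 2ω(ξ)] η^{-(1+2s)} dη ≤ -c ξ^{2-2s} |ω''(ξ)| = -c·r(r-1)·ξ^{r-2s} for all ξ ∈ (0, δ]. -/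
open Set Real MeasureTheory

lemma sdib_mono_aux {F G : ℝ → ℝ} {a b : ℝ}
    (hFc : ContinuousOn F (Icc a b))
    (hFG : ∀ t ∈ Ioo a b, HasDerivAt F (G t) t)
    (hG : ∀ t ∈ Ioo a b, 0 ≤ G t) : MonotoneOn F (Icc a b) := by
  apply monotoneOn_of_deriv_nonneg (convex_Icc a b) hFc
  · intro t ht
    rw [interior_Icc] at ht
    exact (hFG t ht).differentiableAt.differentiableWithinAt
  · intro t ht
    rw [interior_Icc] at ht
    rw [(hFG t ht).deriv]
    exact hG t ht

lemma sdib_lower {r ξ : ℝ} (hr1 : 1 < r) (hr2 : r < 2) (hξ : 0 < ξ) :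
    ∀ t ∈ Icc (0:ℝ) ξ, r * (r - 1) * ξ ^ (r - 2) / 4 * t ^ 2
      ≤ (ξ + t) ^ r + (ξ - t) ^ r - 2 * ξ ^ r := by
  have hr0 : (0:ℝ) < r := by linarith
  have hrr : (0:ℝ) < r * (r - 1) := by nlinarith
  set K : ℝ := r * (r - 1) * (2 * ξ) ^ (r - 2) / 2 with hK
  have hKpos : 0 < K := by
    apply div_pos (mul_pos hrr (rpow_pos_of_pos (by linarith) _)) two_pos
  set G : ℝ → ℝ := fun t => r * (ξ + t) ^ (r - 1) - r * (ξ - t) ^ (r - 1) - 2 * K * t with hG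
  set F : ℝ → ℝ := fun t => (ξ + t) ^ r + (ξ - t) ^ r - 2 * ξ ^ r - K * t ^ 2 with hF
  -- G has derivative H and H ≥ 0 on Ioo
  have hGmono : MonotoneOn G (Icc 0 ξ) := by
    apply sdib_mono_aux (G := fun t =>
      r * (1 * (r - 1) * (ξ + t) ^ (r - 1 - 1)) - r * (-1 * (r - 1) * (ξ - t) ^ (r - 1 - 1)) - 2 * K)
    · apply Continuous.continuousOn
      have c1 : Continuous (fun t : ℝ => (ξ + t) ^ (r - 1)) :=
        (continuous_rpow_const (by linarith)).comp (continuous_const.add continuous_id)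
      have c2 : Continuous (fun t : ℝ => (ξ - t) ^ (r - 1)) :=
        (continuous_rpow_const (by linarith)).comp (continuous_const.sub continuous_id)
      exact ((continuous_const.mul c1).sub (continuous_const.mul c2)).sub
        ((continuous_const.mul continuous_const).mul continuous_id)
    · intro t ht
      have hp : (0:ℝ) < ξ + t := by linarith [ht.1]
      have hm : (0:ℝ) < ξ - t := by linarith [ht.2]
      have h1 : HasDerivAt (fun t : ℝ => (ξ + t) ^ (r - 1))
          (1 * (r - 1) * (ξ + t) ^ (r - 1 - 1)) t :=
        ((hasDerivAt_id t).const_add ξ).rpow_const (Or.inl hp.ne')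
      have h2 : HasDerivAt (fun t : ℝ => (ξ - t) ^ (r - 1))
          (-1 * (r - 1) * (ξ - t) ^ (r - 1 - 1)) t :=
        ((hasDerivAt_id t).const_sub ξ).rpow_const (Or.inl hm.ne')
      have h3 : HasDerivAt (fun t : ℝ => 2 * K * t) (2 * K) t := by
        simpa using (hasDerivAt_id t).const_mul (2 * K)
      exact ((h1.const_mul r).sub (h2.const_mul r)).sub h3
    · intro t ht
      have hp : (0:ℝ) < ξ + t := by linarith [ht.1]
      have hm : (0:ℝ) < ξ - t := by linarith [ht.2]
      rw [show r - 1 - 1 = r - 2 by ring]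
      have e1 : (2 * ξ) ^ (r - 2) ≤ (ξ + t) ^ (r - 2) :=
        rpow_le_rpow_of_nonpos hp (by linarith [ht.2]) (by linarith)
      have e2 : (0:ℝ) ≤ (ξ - t) ^ (r - 2) := rpow_nonneg hm.le _
      have h2K : 2 * K = r * (r - 1) * (2 * ξ) ^ (r - 2) := by rw [hK]; ring
      nlinarith [mul_le_mul_of_nonneg_left e1 hrr.le, mul_nonneg hrr.le e2]
  have hG0 : G 0 = 0 := by simp [hG]
  have hGnn : ∀ t ∈ Ioo (0:ℝ) ξ, 0 ≤ G t := by
    intro t ht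
    have := hGmono ⟨le_refl 0, hξ.le⟩ ⟨ht.1.le, ht.2.le⟩ ht.1.le
    rw [hG0] at this; exact this
  have hFmono : MonotoneOn F (Icc 0 ξ) := by
    apply sdib_mono_aux (G := G)
    · apply Continuous.continuousOn
      have c1 : Continuous (fun t : ℝ => (ξ + t) ^ r) :=
        (continuous_rpow_const hr0.le).comp (continuous_const.add continuous_id)
      have c2 : Continuous (fun t : ℝ => (ξ - t) ^ r) :=
        (continuous_rpow_const hr0.le).comp (continuous_const.sub continuous_id)
      exact ((c1.add c2).sub continuous_const).sub (continuous_const.mul (continuous_pow 2))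
    · intro t ht
      have hp : (0:ℝ) < ξ + t := by linarith [ht.1]
      have hm : (0:ℝ) < ξ - t := by linarith [ht.2]
      have h1 : HasDerivAt (fun t : ℝ => (ξ + t) ^ r) (1 * r * (ξ + t) ^ (r - 1)) t :=
        ((hasDerivAt_id t).const_add ξ).rpow_const (Or.inl hp.ne')
      have h2 : HasDerivAt (fun t : ℝ => (ξ - t) ^ r) (-1 * r * (ξ - t) ^ (r - 1)) t :=
        ((hasDerivAt_id t).const_sub ξ).rpow_const (Or.inl hm.ne')
      have h3 : HasDerivAt (fun t : ℝ => K * t ^ 2) (K * (2 * t ^ 1)) t := by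
        exact_mod_cast (hasDerivAt_pow 2 t).const_mul K
      have := ((h1.add h2).sub_const (2 * ξ ^ r)).sub h3
      refine this.congr_deriv ?_
      rw [hG]; ring
    · exact hGnn
  have hF0 : F 0 = 0 := by
    show (ξ + 0) ^ r + (ξ - 0) ^ r - 2 * ξ ^ r - K * 0 ^ 2 = 0
    rw [add_zero, sub_zero]; ring
  intro t ht
  have hFt : 0 ≤ F t := by
    have := hFmono ⟨le_refl 0, hξ.le⟩ ht ht.1
    rw [hF0] at this; exact this
  -- K ≥ r (r-1) ξ^(r-2) / 4
  have hsplit : (2 * ξ) ^ (r - 2) = 2 ^ (r - 2) * ξ ^ (r - 2) :=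
    mul_rpow (by norm_num) hξ.le
  have h2r : (1/2 : ℝ) ≤ 2 ^ (r - 2) := by
    have : (2:ℝ) ^ (-1:ℝ) ≤ 2 ^ (r - 2) :=
      rpow_le_rpow_of_exponent_le one_le_two (by linarith)
    rwa [show ((-1:ℝ) = ((-1 : ℤ) : ℝ)) by norm_num, rpow_intCast, zpow_neg_one,
      show ((2:ℝ)⁻¹ = 1/2) by norm_num] at this
  have hxirn : (0:ℝ) < ξ ^ (r - 2) := rpow_pos_of_pos hξ _
  have hKge : r * (r - 1) * ξ ^ (r - 2) / 4 ≤ K := by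
    rw [hK, hsplit]
    nlinarith [mul_pos hrr hxirn]
  have hFt' : K * t ^ 2 ≤ (ξ + t) ^ r + (ξ - t) ^ r - 2 * ξ ^ r := by
    have : F t = (ξ + t) ^ r + (ξ - t) ^ r - 2 * ξ ^ r - K * t ^ 2 := rfl
    linarith [hFt, this ▸ hFt]
  nlinarith [mul_le_mul_of_nonneg_right hKge (sq_nonneg t)]

lemma sdib_upper {r ξ : ℝ} (hr1 : 1 < r) (hξ : 0 < ξ) :
    ∀ t ∈ Icc (0:ℝ) ξ, (ξ + t) ^ r + (ξ - t) ^ r - 2 * ξ ^ r ≤ r * (2 * ξ) ^ (r - 1) * t := by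
  have hr0 : (0:ℝ) < r := by linarith
  set Φ : ℝ → ℝ := fun t => r * (2 * ξ) ^ (r - 1) * t - (ξ + t) ^ r with hΦ
  have hmono : MonotoneOn Φ (Icc 0 ξ) := by
    apply sdib_mono_aux (G := fun t => r * (2 * ξ) ^ (r - 1) - 1 * r * (ξ + t) ^ (r - 1))
    · apply Continuous.continuousOn
      exact (continuous_const.mul continuous_id).sub
        ((continuous_rpow_const hr0.le).comp (continuous_const.add continuous_id))
    · intro t ht
      have hp : (0:ℝ) < ξ + t := by linarith [ht.1]
      have h1 : HasDerivAt (fun t : ℝ => (ξ + t) ^ r) (1 * r * (ξ + t) ^ (r - 1)) t :=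
        ((hasDerivAt_id t).const_add ξ).rpow_const (Or.inl hp.ne')
      have h2 : HasDerivAt (fun t : ℝ => r * (2 * ξ) ^ (r - 1) * t) (r * (2 * ξ) ^ (r - 1)) t := by
        simpa using (hasDerivAt_id t).const_mul (r * (2 * ξ) ^ (r - 1))
      exact h2.sub h1
    · intro t ht
      have hp : (0:ℝ) < ξ + t := by linarith [ht.1]
      have e1 : (ξ + t) ^ (r - 1) ≤ (2 * ξ) ^ (r - 1) :=
        rpow_le_rpow hp.le (by linarith [ht.2]) (by linarith)
      nlinarith [e1, mul_le_mul_of_nonneg_left e1 hr0.le]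
  intro t ht
  have h1 : Φ 0 ≤ Φ t := hmono ⟨le_refl 0, hξ.le⟩ ht ht.1
  have h0 : Φ 0 = -ξ ^ r := by
    show r * (2 * ξ) ^ (r - 1) * 0 - (ξ + 0) ^ r = -ξ ^ r
    rw [add_zero]; ring
  have h2 : (ξ - t) ^ r ≤ ξ ^ r := rpow_le_rpow (by linarith [ht.2]) (by linarith [ht.1]) hr0.le
  rw [h0] at h1
  have : (ξ + t) ^ r - ξ ^ r ≤ r * (2 * ξ) ^ (r - 1) * t := by
    have := h1; simp only [hΦ] at this; linarith
  linarith

theorem second_difference_integral_bound (s r : ℝ)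
    (hs0 : 0 < s) (hs1 : s < 1/2)
    (hr1 : 1 < r) (hr2 : r < 1 + 2 * s) :
    ∃ c > (0:ℝ), ∃ δ₀ > (0:ℝ), ∀ δ ∈ Ioc (0:ℝ) δ₀, ∀ ξ ∈ Ioc (0:ℝ) δ,
      (∫ η in (0:ℝ)..(ξ / 2),
          (((ξ + 2 * η) - (ξ + 2 * η) ^ r) + ((ξ - 2 * η) - (ξ - 2 * η) ^ r)
            - 2 * (ξ - ξ ^ r)) * η ^ (-(1 + 2 * s)))
        ≤ -c * (r * (r - 1)) * ξ ^ (r - 2 * s) := by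
  refine ⟨1/8, by norm_num, 1, one_pos, ?_⟩
  intro δ hδ ξ hξ
  have hξ0 : 0 < ξ := hξ.1
  have hr2' : r < 2 := by linarith
  have hr0 : (0:ℝ) < r := by linarith
  have hrr : (0:ℝ) < r * (r - 1) := by nlinarith
  have hhalf : (0:ℝ) < ξ / 2 := by linarith
  set C : ℝ := r * (r - 1) * ξ ^ (r - 2) with hC
  have hCpos : 0 < C := mul_pos hrr (rpow_pos_of_pos hξ0 _)
  -- pointwise bound on Icc
  have hfg : ∀ η ∈ Icc (0:ℝ) (ξ/2),
      (((ξ + 2 * η) - (ξ + 2 * η) ^ r) + ((ξ - 2 * η) - (ξ - 2 * η) ^ r)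
        - 2 * (ξ - ξ ^ r)) * η ^ (-(1 + 2 * s)) ≤ -C * η ^ (1 - 2 * s) := by
    intro η hη
    rcases eq_or_lt_of_le hη.1 with h0 | h0
    · rw [← h0]
      rw [Real.zero_rpow (by linarith : -(1 + 2*s) ≠ 0),
        Real.zero_rpow (by linarith : 1 - 2*s ≠ 0)]
      simp
    · have ht : 2*η ∈ Icc (0:ℝ) ξ := ⟨by linarith, by linarith [hη.2]⟩
      have hD := sdib_lower hr1 hr2' hξ0 (2*η) ht
      have hηpow : (0:ℝ) < η ^ (-(1 + 2*s)) := rpow_pos_of_pos h0 _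
      have hD' : C * η^2 ≤ (ξ + 2*η)^r + (ξ - 2*η)^r - 2*ξ^r := by
        have he : r*(r-1)*ξ^(r-2)/4 * (2*η)^2 = C * η^2 := by rw [hC]; ring
        rw [he] at hD; exact hD
      have hbr : ((ξ + 2*η) - (ξ + 2*η)^r) + ((ξ - 2*η) - (ξ - 2*η)^r) - 2*(ξ - ξ^r)
          = -((ξ + 2*η)^r + (ξ - 2*η)^r - 2*ξ^r) := by ring
      rw [hbr]
      have step1 : -((ξ + 2*η)^r + (ξ - 2*η)^r - 2*ξ^r) * η ^ (-(1 + 2*s))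
          ≤ -(C * η^2) * η ^ (-(1 + 2*s)) := by
        apply mul_le_mul_of_nonneg_right _ hηpow.le
        linarith
      refine step1.trans (le_of_eq ?_)
      have hmul : (η:ℝ)^(2:ℕ) * η ^ (-(1 + 2*s)) = η ^ (1 - 2*s) := by
        rw [← Real.rpow_natCast η 2, ← Real.rpow_add h0]
        congr 1; ring
      calc -(C * η^2) * η ^ (-(1 + 2*s)) = -C * ((η:ℝ)^(2:ℕ) * η ^ (-(1 + 2*s))) := by ring
        _ = -C * η ^ (1 - 2*s) := by rw [hmul]
  -- integrability of integrand
  have hfint : IntervalIntegrable (fun η =>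
      (((ξ + 2 * η) - (ξ + 2 * η) ^ r) + ((ξ - 2 * η) - (ξ - 2 * η) ^ r)
        - 2 * (ξ - ξ ^ r)) * η ^ (-(1 + 2 * s))) volume 0 (ξ/2) := by
    apply IntervalIntegrable.mono_fun'
      (g := fun η => (2 * r * (2*ξ) ^ (r-1)) * η ^ (-(2*s)))
    · exact (intervalIntegral.intervalIntegrable_rpow' (by linarith)).const_mul _
    · apply ContinuousOn.aestronglyMeasurable _ measurableSet_uIoc
      intro η hη
      rw [uIoc_of_le hhalf.le] at hη
      apply ContinuousAt.continuousWithinAt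
      apply ContinuousAt.mul
      · have c1 : Continuous (fun η : ℝ => ξ + 2*η) :=
          continuous_const.add (continuous_const.mul continuous_id)
        have c2 : Continuous (fun η : ℝ => ξ - 2*η) :=
          continuous_const.sub (continuous_const.mul continuous_id)
        exact (((c1.sub ((continuous_rpow_const hr0.le).comp c1)).add
          (c2.sub ((continuous_rpow_const hr0.le).comp c2))).sub continuous_const).continuousAt
      · exact Real.continuousAt_rpow_const η _ (Or.inl hη.1.ne')
    · rw [uIoc_of_le hhalf.le]
      filter_upwards [ae_restrict_mem measurableSet_Ioc] with η hη
      have hη0 : 0 < η := hη.1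
      have ht : 2*η ∈ Icc (0:ℝ) ξ := ⟨by linarith, by linarith [hη.2]⟩
      have hup := sdib_upper hr1 hξ0 (2*η) ht
      have hlo := sdib_lower hr1 hr2' hξ0 (2*η) ht
      have hDnn : 0 ≤ (ξ + 2*η)^r + (ξ - 2*η)^r - 2*ξ^r := by
        refine le_trans ?_ hlo
        positivity
      have hηpow : (0:ℝ) < η ^ (-(1 + 2*s)) := rpow_pos_of_pos hη0 _
      have hbr : ((ξ + 2*η) - (ξ + 2*η)^r) + ((ξ - 2*η) - (ξ - 2*η)^r) - 2*(ξ - ξ^r)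
          = -((ξ + 2*η)^r + (ξ - 2*η)^r - 2*ξ^r) := by ring
      rw [Real.norm_eq_abs, hbr, abs_mul, abs_neg, abs_of_nonneg hDnn, abs_of_nonneg hηpow.le]
      have hmul : (η:ℝ) * η ^ (-(1 + 2*s)) = η ^ (-(2*s)) := by
        nth_rewrite 1 [← Real.rpow_one η]
        rw [← Real.rpow_add hη0]
        congr 1; ring
      calc ((ξ + 2*η)^r + (ξ - 2*η)^r - 2*ξ^r) * η ^ (-(1 + 2*s))
          ≤ (r * (2*ξ) ^ (r-1) * (2*η)) * η ^ (-(1 + 2*s)) :=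
            mul_le_mul_of_nonneg_right hup hηpow.le
        _ = (2 * r * (2*ξ) ^ (r-1)) * ((η:ℝ) * η ^ (-(1 + 2*s))) := by ring
        _ = (2 * r * (2*ξ) ^ (r-1)) * η ^ (-(2*s)) := by rw [hmul]
  have hgint : IntervalIntegrable (fun η => -C * η ^ (1 - 2*s)) volume 0 (ξ/2) :=
    (intervalIntegral.intervalIntegrable_rpow' (by linarith)).const_mul _
  have hstep := intervalIntegral.integral_mono_on hhalf.le hfint hgint hfg
  refine hstep.trans ?_
  -- compute the g integral
  have hgval : (∫ η in (0:ℝ)..(ξ/2), -C * η ^ (1 - 2*s))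
      = -C * ((ξ/2) ^ (2 - 2*s) / (2 - 2*s)) := by
    rw [intervalIntegral.integral_const_mul, integral_rpow (Or.inl (by linarith))]
    rw [Real.zero_rpow (by linarith : 1 - 2*s + 1 ≠ 0)]
    rw [show 1 - 2*s + 1 = 2 - 2*s by ring]
    ring
  rw [hgval]
  -- final arithmetic
  have hξp : (0:ℝ) < ξ ^ (2 - 2*s) := rpow_pos_of_pos hξ0 _
  have h2pos : (0:ℝ) < (2:ℝ) ^ (2 - 2*s) := rpow_pos_of_pos two_pos _
  have h4 : (2:ℝ) ^ (2 - 2*s) ≤ 4 := by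
    have := rpow_le_rpow_of_exponent_le one_le_two (by linarith : 2 - 2*s ≤ (2:ℝ))
    rwa [show ((2:ℝ) ^ (2:ℝ) = 4) by
      rw [show ((2:ℝ) = ((2:ℕ):ℝ)) by norm_num, Real.rpow_natCast]; norm_num] at this
  have hd : (2:ℝ) ^ (2 - 2*s) * (2 - 2*s) ≤ 8 := by nlinarith
  have hpow : ξ^(r-2) * ξ^(2-2*s) = ξ^(r-2*s) := by
    rw [← Real.rpow_add hξ0]; congr 1; ring
  have key : (1/8) * (r*(r-1)) * ξ^(r-2*s) ≤ C * ((ξ/2) ^ (2-2*s) / (2-2*s)) := by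
    rw [div_rpow hξ0.le (by norm_num : (0:ℝ) ≤ 2), hC, div_div]
    calc (1/8) * (r*(r-1)) * ξ^(r-2*s)
        = r*(r-1)*ξ^(r-2) * (ξ^(2-2*s) / 8) := by rw [← hpow]; ring
      _ ≤ r*(r-1)*ξ^(r-2) * (ξ^(2-2*s) / ((2:ℝ)^(2-2*s)*(2-2*s))) := by
          have ha : (0:ℝ) ≤ r*(r-1)*ξ^(r-2) := le_of_lt (mul_pos hrr (rpow_pos_of_pos hξ0 _))
          have hb : (0:ℝ) < (2:ℝ)^(2-2*s)*(2-2*s) := mul_pos h2pos (by linarith)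
          gcongr
  linarith
end
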